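/- arXiv:1204.2224 — 2 statements merged into one kernel-verified Lean document; each statement's English description precedes it below -/
import Mathlib

section
/- Let F be an integrable subbundle of the tangent bundle TM of a Riemannian manifold (M, g^{TM}), and let ∇^{TM} be the Levi-Civita connection. Suppose the metric satisfies the almost-isometry condition: for all X ∈ Γ(F) and U, V sections of an orthogonal complement subbundle F_i^⊥ of F, one has ⟨[X,U],V⟩ + ⟨U,[X,V]⟩ = X⟨U,V⟩. Then ⟨X, ∇^{TM}_U V + ∇^{TM}_V U⟩ = 0 for all X ∈ Γ(F) and U, V ∈ Γ(F_i^⊥). -/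
/-!
Abstract algebraic model of a Riemannian manifold `(M, g^{TM})` with an
integrable subbundle `F ⊆ TM`: `A` = smooth functions, `V` = vector fields,
`act` = directional derivative, `g` = metric, `nabla` = Levi-Civita connection.
Subbundles are modelled by submodules of the module of vector fields
(their modules of smooth sections).
-/

/-- Abstract model of the functions, vector fields, metric and Levi-Civita
connection of a Riemannian manifold `(M, g)`. -/
structure RiemannianModel (A V : Type*) [CommRing A] [AddCommGroup V]
    [Module A V] [LieRing V] where
  /-- directional derivative of functions along vector fields -/
  act : V → A → A
  act_add : ∀ (X : V) (a b : A), act X (a + b) = act X a + act X b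
  /-- Leibniz rule: each `act X` is a derivation -/
  act_mul : ∀ (X : V) (a b : A), act X (a * b) = act X a * b + a * act X b
  /-- the Riemannian metric -/
  g : V → V → A
  g_symm : ∀ X Y, g X Y = g Y X
  g_add_left : ∀ X Y Z, g (X + Y) Z = g X Z + g Y Z
  g_smul_left : ∀ (a : A) (X Y : V), g (a • X) Y = a * g X Y
  /-- the Levi-Civita connection -/
  nabla : V → V → V
  /-- metric compatibility of the Levi-Civita connection -/
  nabla_compat : ∀ X Y Z, act X (g Y Z) = g (nabla X Y) Z + g Y (nabla X Z)
  /-- the Levi-Civita connection is torsion free -/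
  nabla_torsionFree : ∀ X Y, nabla X Y - nabla Y X = ⁅X, Y⁆

/-!
By metric compatibility, `X ⊥ U, W` gives `⟨X, ∇_U W⟩ = -⟨∇_U X, W⟩`, and torsion-freeness
turns `∇_U X` into `∇_X U - [X, U]`. Doing the same with `U` and `W` exchanged and adding,
`⟨X, ∇_U W + ∇_W U⟩ = ⟨[X,U],W⟩ + ⟨U,[X,W]⟩ - X⟨U,W⟩`, which is exactly the defect of the
almost-isometry condition.
-/

namespace RiemannianModel

variable {A V : Type*} [CommRing A] [AddCommGroup V] [Module A V] [LieRing V]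
  (D : RiemannianModel A V)

theorem act_zero (X : V) : D.act X 0 = 0 := by
  have h := D.act_add X 0 0
  rw [add_zero] at h
  linear_combination -h

theorem g_sub_left (X Y Z : V) : D.g (X - Y) Z = D.g X Z - D.g Y Z := by
  have h := D.g_add_left (X - Y) Y Z
  rw [sub_add_cancel] at h
  linear_combination -h

theorem nabla_eq_nabla_sub_lie (X Y : V) : D.nabla Y X = D.nabla X Y - ⁅X, Y⁆ := by
  rw [← D.nabla_torsionFree, sub_sub_cancel]

theorem g_nabla_of_g_eq_zero {X W : V} (h : D.g X W = 0) (U : V) :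
    D.g X (D.nabla U W) = D.g ⁅X, U⁆ W - D.g (D.nabla X U) W := by
  have compat := D.nabla_compat U X W
  rw [h, act_zero, nabla_eq_nabla_sub_lie, g_sub_left] at compat
  linear_combination -compat

theorem g_nabla_add_nabla_swap {X U W : V} (hU : D.g X U = 0) (hW : D.g X W = 0) :
    D.g X (D.nabla U W + D.nabla W U) =
      D.g ⁅X, U⁆ W + D.g U ⁅X, W⁆ - D.act X (D.g U W) := by
  rw [D.g_symm, D.g_add_left, D.g_symm, D.g_nabla_of_g_eq_zero hW,
    D.g_symm (D.nabla W U), D.g_nabla_of_g_eq_zero hU, D.nabla_compat X U W,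
    D.g_symm ⁅X, W⁆, D.g_symm (D.nabla X W)]
  ring

end RiemannianModel

theorem almost_isometry_nabla_symm_orthogonal_general {A V : Type*} [CommRing A]
    [AddCommGroup V] [Module A V] [LieRing V] (D : RiemannianModel A V)
    (F Fi : Submodule A V)
    -- `Fi` is orthogonal to `F`
    (hOrtho : ∀ X ∈ F, ∀ U ∈ Fi, D.g X U = 0)
    -- infinitesimal almost-isometry condition
    (hAI : ∀ X ∈ F, ∀ U ∈ Fi, ∀ W ∈ Fi,
      D.g ⁅X, U⁆ W + D.g U ⁅X, W⁆ = D.act X (D.g U W)) :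
    ∀ X ∈ F, ∀ U ∈ Fi, ∀ W ∈ Fi,
      D.g X (D.nabla U W + D.nabla W U) = 0 := by
  intro X hX U hU W hW
  rw [D.g_nabla_add_nabla_swap (hOrtho X hX U hU) (hOrtho X hX W hW), hAI X hX U hU W hW,
    sub_self]

/-- If `F` is an integrable subbundle of `TM`, `F_i^⊥` a subbundle orthogonal
to `F`, and the almost-isometry condition
`⟨[X,U],V⟩ + ⟨U,[X,V]⟩ = X⟨U,V⟩` holds for `X ∈ Γ(F)`, `U, V ∈ Γ(F_i^⊥)`,
then `⟨X, ∇^{TM}_U V + ∇^{TM}_V U⟩ = 0` for all such `X, U, V`. -/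
theorem almost_isometry_nabla_symm_orthogonal {A V : Type*} [CommRing A]
    [AddCommGroup V] [Module A V] [LieRing V] (D : RiemannianModel A V)
    (F Fi : Submodule A V)
    -- `F` is integrable
    (hInt : ∀ X ∈ F, ∀ Y ∈ F, ⁅X, Y⁆ ∈ F)
    -- `Fi` is orthogonal to `F`
    (hOrtho : ∀ X ∈ F, ∀ U ∈ Fi, D.g X U = 0)
    -- infinitesimal almost-isometry condition
    (hAI : ∀ X ∈ F, ∀ U ∈ Fi, ∀ W ∈ Fi,
      D.g ⁅X, U⁆ W + D.g U ⁅X, W⁆ = D.act X (D.g U W)) :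
    ∀ X ∈ F, ∀ U ∈ Fi, ∀ W ∈ Fi,
      D.g X (D.nabla U W + D.nabla W U) = 0 :=
  almost_isometry_nabla_symm_orthogonal_general D F Fi hOrtho hAI
end

section
/- Under the almost-isometry conditions with F and F_2^⊥ both integrable, for U_2, V_2 ∈ Γ(F_2^⊥) and X ∈ Γ(F): ⟨∇^{TM,β,ε}_{U_2}V_2, X⟩ = (1/2)⟨[U_2,V_2], X⟩ = 0 for all β, ε > 0. -/
/-- The rescaled metric
`g_{β,ε} = β² g^F ⊕ ε^{-2} g^{F_1^⊥} ⊕ g^{F_2^⊥}`,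
where `pF, p1, p2` are the orthogonal projections onto the three summands of
the orthogonal splitting `TM = F ⊕ F_1^⊥ ⊕ F_2^⊥`. -/
noncomputable def rescaledMetric {A V : Type*} [CommRing A] [Algebra ℝ A] [AddCommGroup V]
    [Module A V] [LieRing V] (D : RiemannianModel A V)
    (pF p1 p2 : V →ₗ[A] V) (β ε : ℝ) : V → V → A := fun X Y =>
  (β ^ 2) • D.g (pF X) (pF Y) + (ε ^ 2)⁻¹ • D.g (p1 X) (p1 Y)
    + D.g (p2 X) (p2 Y)

/-!
Apply the Koszul formula for `∇^{TM,β,ε}` to `U₂, V₂ ∈ F₂` and `X ∈ F`. Since `g_{β,ε}` is `β² g`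
against `F` and `g` against `F₂`, the terms pairing `F₂` with `F` drop out (this is where
integrability of `F₂` enters, for `[U₂, V₂]`), and what is left is
`X g(U₂, V₂) - g([X, U₂], V₂) - g(U₂, [X, V₂])`, which vanishes by the almost-isometry
condition on `F₂`. Hence `2 β² g(∇_{U₂} V₂, X) = 0`.
-/

theorem koszul_formula {A V : Type*} [CommRing A] [AddCommGroup V] [Bracket V V]
    (act : V → A → A) (G : V → V → A) (hG_symm : ∀ X Y, G X Y = G Y X)
    (hG_add : ∀ X Y Z, G (X + Y) Z = G X Z + G Y Z) (nabla : V → V → V)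
    (hcompat : ∀ X Y Z, act X (G Y Z) = G (nabla X Y) Z + G Y (nabla X Z))
    (htorsion : ∀ X Y, nabla X Y - nabla Y X = ⁅X, Y⁆) (X Y Z : V) :
    2 * G (nabla X Y) Z = act X (G Y Z) + act Y (G X Z) - act Z (G X Y)
      + G ⁅X, Y⁆ Z + G ⁅Z, X⁆ Y + G ⁅Z, Y⁆ X := by
  have hG_sub (X Y W : V) : G (X - Y) W = G X W - G Y W :=
    map_sub (AddMonoidHom.mk' (G · W) fun X Y => hG_add X Y W) X Y
  simp only [← htorsion, hG_sub, hcompat]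
  linear_combination hG_symm X (nabla Z Y) - hG_symm Y (nabla X Z) - hG_symm X (nabla Y Z)

namespace RiemannianModel

variable {A V : Type*} [CommRing A] [AddCommGroup V] [Module A V] [LieRing V]
  (D : RiemannianModel A V)

theorem g_zero_right (X : V) : D.g X 0 = 0 := by
  simpa [D.g_symm X] using D.g_smul_left 0 0 X

end RiemannianModel

section rescaledMetric

variable {A V : Type*} [CommRing A] [Algebra ℝ A] [AddCommGroup V] [Module A V] [LieRing V]
  (D : RiemannianModel A V) (pF p1 p2 : V →ₗ[A] V) (β ε : ℝ)

theorem rescaledMetric_symm (X Y : V) :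
    rescaledMetric D pF p1 p2 β ε X Y = rescaledMetric D pF p1 p2 β ε Y X := by
  simp only [rescaledMetric, D.g_symm (pF X), D.g_symm (p1 X), D.g_symm (p2 X)]

theorem rescaledMetric_add_left (X Y Z : V) :
    rescaledMetric D pF p1 p2 β ε (X + Y) Z
      = rescaledMetric D pF p1 p2 β ε X Z + rescaledMetric D pF p1 p2 β ε Y Z := by
  simp only [rescaledMetric, map_add, D.g_add_left, smul_add]
  abel

variable {F F1 F2 : Submodule A V}

theorem rescaledMetric_of_mem_F {W Y : V} (hY : Y ∈ F)
    (hsplit : ∀ v : V, pF v + p1 v + p2 v = v)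
    (hp1_mem : ∀ v, p1 v ∈ F1) (hp2_mem : ∀ v, p2 v ∈ F2)
    (hpF_id : ∀ v ∈ F, pF v = v) (hp1_F : ∀ v ∈ F, p1 v = 0) (hp2_F : ∀ v ∈ F, p2 v = 0)
    (hOrtho1 : ∀ X ∈ F, ∀ U ∈ F1, D.g X U = 0) (hOrtho2 : ∀ X ∈ F, ∀ U ∈ F2, D.g X U = 0) :
    rescaledMetric D pF p1 p2 β ε W Y = β ^ 2 • D.g W Y := by
  have hW : D.g W Y = D.g (pF W) Y := by
    conv_lhs => rw [← hsplit W]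
    rw [D.g_add_left, D.g_add_left, D.g_symm (p1 W), D.g_symm (p2 W),
      hOrtho1 Y hY _ (hp1_mem W), hOrtho2 Y hY _ (hp2_mem W), add_zero, add_zero]
  simp [rescaledMetric, hpF_id Y hY, hp1_F Y hY, hp2_F Y hY, D.g_zero_right, hW]

theorem rescaledMetric_of_mem_F2 {W Z : V} (hZ : Z ∈ F2)
    (hsplit : ∀ v : V, pF v + p1 v + p2 v = v)
    (hpF_mem : ∀ v, pF v ∈ F) (hp1_mem : ∀ v, p1 v ∈ F1)
    (hp2_id : ∀ v ∈ F2, p2 v = v) (hp1_F2 : ∀ v ∈ F2, p1 v = 0)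
    (hOrtho2 : ∀ X ∈ F, ∀ U ∈ F2, D.g X U = 0) (hOrtho12 : ∀ U ∈ F1, ∀ W ∈ F2, D.g U W = 0) :
    rescaledMetric D pF p1 p2 β ε W Z = D.g W Z := by
  have hpF : pF Z = 0 := by
    simpa [hp1_F2 Z hZ, hp2_id Z hZ] using hsplit Z
  have hW : D.g W Z = D.g (p2 W) Z := by
    conv_lhs => rw [← hsplit W]
    rw [D.g_add_left, D.g_add_left, hOrtho2 _ (hpF_mem W) Z hZ, hOrtho12 _ (hp1_mem W) Z hZ,
      zero_add, zero_add]
  simp [rescaledMetric, hpF, hp1_F2 Z hZ, hp2_id Z hZ, D.g_zero_right, hW]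

end rescaledMetric

theorem rescaled_connection_F2_pairing_vanishes_general {A V : Type*}
    [CommRing A] [Algebra ℝ A] [AddCommGroup V] [Module A V] [LieRing V]
    (D : RiemannianModel A V)
    (F F1 F2 : Submodule A V) (pF p1 p2 : V →ₗ[A] V)
    -- `pF, p1, p2` are the projections of the splitting `V = F ⊕ F1 ⊕ F2`
    (hsplit : ∀ v : V, pF v + p1 v + p2 v = v)
    (hpF_mem : ∀ v, pF v ∈ F) (hp1_mem : ∀ v, p1 v ∈ F1) (hp2_mem : ∀ v, p2 v ∈ F2)
    (hpF_id : ∀ v ∈ F, pF v = v) (hp2_id : ∀ v ∈ F2, p2 v = v)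
    (hp1_F : ∀ v ∈ F, p1 v = 0) (hp1_F2 : ∀ v ∈ F2, p1 v = 0)
    (hp2_F : ∀ v ∈ F, p2 v = 0)
    -- the splitting is orthogonal
    (hOrtho1 : ∀ X ∈ F, ∀ U ∈ F1, D.g X U = 0)
    (hOrtho2 : ∀ X ∈ F, ∀ U ∈ F2, D.g X U = 0)
    (hOrtho12 : ∀ U ∈ F1, ∀ W ∈ F2, D.g U W = 0)
    -- `F_2^⊥` is integrable (Condition (C))
    (hIntF2 : ∀ U ∈ F2, ∀ W ∈ F2, ⁅U, W⁆ ∈ F2)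
    -- almost-isometry conditions
    (hAI2 : ∀ X ∈ F, ∀ U ∈ F2, ∀ W ∈ F2,
      D.g ⁅X, U⁆ W + D.g U ⁅X, W⁆ = D.act X (D.g U W))
    -- the scaling parameters
    (β ε : ℝ) (hβ : 0 < β)
    -- the Levi-Civita connection `∇^{TM,β,ε}` of the rescaled metric
    (nablaBE : V → V → V)
    (hcompat : ∀ X Y Z : V,
      D.act X (rescaledMetric D pF p1 p2 β ε Y Z)
        = rescaledMetric D pF p1 p2 β ε (nablaBE X Y) Z
          + rescaledMetric D pF p1 p2 β ε Y (nablaBE X Z))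
    (htorsion : ∀ X Y : V, nablaBE X Y - nablaBE Y X = ⁅X, Y⁆) :
    ∀ U2 ∈ F2, ∀ V2 ∈ F2, ∀ X ∈ F,
      2 * D.g (nablaBE U2 V2) X = D.g ⁅U2, V2⁆ X ∧
      D.g (nablaBE U2 V2) X = 0 := by
  intro U2 hU2 V2 hV2 X hX
  have hG_F (W : V) : rescaledMetric D pF p1 p2 β ε W X = β ^ 2 • D.g W X :=
    rescaledMetric_of_mem_F D pF p1 p2 β ε hX hsplit hp1_mem hp2_mem hpF_id hp1_F hp2_F
      hOrtho1 hOrtho2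
  have hG_F2 (W : V) {Z : V} (hZ : Z ∈ F2) : rescaledMetric D pF p1 p2 β ε W Z = D.g W Z :=
    rescaledMetric_of_mem_F2 D pF p1 p2 β ε hZ hsplit hpF_mem hp1_mem hp2_id hp1_F2
      hOrtho2 hOrtho12
  have hperp {U : V} (hU : U ∈ F2) : D.g U X = 0 := by
    rw [D.g_symm]; exact hOrtho2 X hX U hU
  have hkoszul : 2 * rescaledMetric D pF p1 p2 β ε (nablaBE U2 V2) X = 0 := by
    rw [koszul_formula D.act _ (rescaledMetric_symm D pF p1 p2 β ε)
      (rescaledMetric_add_left D pF p1 p2 β ε) nablaBE hcompat htorsion]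
    simp only [hG_F, hG_F2 _ hU2, hG_F2 _ hV2, hperp hU2, hperp hV2,
      hperp (hIntF2 U2 hU2 V2 hV2), smul_zero, D.act_zero]
    linear_combination hAI2 X hX U2 hU2 V2 hV2 + D.g_symm ⁅X, V2⁆ U2
  have hzero : D.g (nablaBE U2 V2) X = 0 := by
    have hunit : IsUnit (2 * β ^ 2) := (by positivity : (0 : ℝ) < 2 * β ^ 2).ne'.isUnit
    rw [← hunit.smul_eq_zero, mul_smul, two_smul, ← two_mul, ← hG_F]
    exact hkoszul
  exact ⟨by rw [hzero, hperp (hIntF2 U2 hU2 V2 hV2), mul_zero], hzero⟩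

theorem rescaled_connection_F2_pairing_vanishes {A V : Type*}
    [CommRing A] [Algebra ℝ A] [AddCommGroup V] [Module A V] [LieRing V]
    (D : RiemannianModel A V)
    (F F1 F2 : Submodule A V) (pF p1 p2 : V →ₗ[A] V)
    -- `pF, p1, p2` are the projections of the splitting `V = F ⊕ F1 ⊕ F2`
    (hsplit : ∀ v : V, pF v + p1 v + p2 v = v)
    (hpF_mem : ∀ v, pF v ∈ F) (hp1_mem : ∀ v, p1 v ∈ F1) (hp2_mem : ∀ v, p2 v ∈ F2)
    (hpF_id : ∀ v ∈ F, pF v = v) (hp1_id : ∀ v ∈ F1, p1 v = v) (hp2_id : ∀ v ∈ F2, p2 v = v)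
    (hp1_F : ∀ v ∈ F, p1 v = 0) (hp1_F2 : ∀ v ∈ F2, p1 v = 0)
    (hp2_F : ∀ v ∈ F, p2 v = 0) (hp2_F1 : ∀ v ∈ F1, p2 v = 0)
    -- the splitting is orthogonal
    (hOrtho1 : ∀ X ∈ F, ∀ U ∈ F1, D.g X U = 0)
    (hOrtho2 : ∀ X ∈ F, ∀ U ∈ F2, D.g X U = 0)
    (hOrtho12 : ∀ U ∈ F1, ∀ W ∈ F2, D.g U W = 0)
    -- `F` is integrable
    (hIntF : ∀ X ∈ F, ∀ Y ∈ F, ⁅X, Y⁆ ∈ F)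
    -- `F_2^⊥` is integrable (Condition (C))
    (hIntF2 : ∀ U ∈ F2, ∀ W ∈ F2, ⁅U, W⁆ ∈ F2)
    -- almost-isometry conditions
    (hAI1 : ∀ X ∈ F, ∀ U ∈ F1, ∀ W ∈ F1,
      D.g ⁅X, U⁆ W + D.g U ⁅X, W⁆ = D.act X (D.g U W))
    (hAI2 : ∀ X ∈ F, ∀ U ∈ F2, ∀ W ∈ F2,
      D.g ⁅X, U⁆ W + D.g U ⁅X, W⁆ = D.act X (D.g U W))
    (hAI3 : ∀ X ∈ F, ∀ U1 ∈ F1, ∀ U2 ∈ F2, D.g ⁅X, U2⁆ U1 = 0)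
    -- the scaling parameters
    (β ε : ℝ) (hβ : 0 < β) (hε : 0 < ε)
    -- the Levi-Civita connection `∇^{TM,β,ε}` of the rescaled metric
    (nablaBE : V → V → V)
    (hcompat : ∀ X Y Z : V,
      D.act X (rescaledMetric D pF p1 p2 β ε Y Z)
        = rescaledMetric D pF p1 p2 β ε (nablaBE X Y) Z
          + rescaledMetric D pF p1 p2 β ε Y (nablaBE X Z))
    (htorsion : ∀ X Y : V, nablaBE X Y - nablaBE Y X = ⁅X, Y⁆) :
    ∀ U2 ∈ F2, ∀ V2 ∈ F2, ∀ X ∈ F,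
      2 * D.g (nablaBE U2 V2) X = D.g ⁅U2, V2⁆ X ∧
      D.g (nablaBE U2 V2) X = 0 :=
  rescaled_connection_F2_pairing_vanishes_general D F F1 F2 pF p1 p2 hsplit hpF_mem hp1_mem hp2_mem
    hpF_id hp2_id hp1_F hp1_F2 hp2_F hOrtho1 hOrtho2 hOrtho12 hIntF2 hAI2 β ε hβ nablaBE hcompat
    htorsion
end
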